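/- arXiv:1910.03528 — 2 statements merged into one kernel-verified Lean document; each statement's English description precedes it below -/
import Mathlib

section
/- Let $a < b$ be reals, let $a(n)$ be complex numbers, and let $Q$ be a positive integer. Then $\left|\sum_{a < n \leq b} a(n)\right|^2 \leq \left(1 + \frac{b-a}{Q}\right) \sum_{|q| \leq Q} \left(1 - \frac{|q|}{Q}\right) \sum_{\substack{a < n \le b \\ a < n+q \le b}} a(n+q)\overline{a(n)}$. -/
open Complex

namespace WvdC

variable (f : ℤ → ℂ) (A B : ℤ) (Q : ℕ)

noncomputable def h (q m : ℤ) : ℂ := if m + q ∈ Finset.Ioc A B then f (m + q) else 0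

noncomputable def g (m : ℤ) : ℂ := ∑ q ∈ Finset.Icc (1:ℤ) (Q:ℤ), h f A B q m

noncomputable def W (q : ℤ) : ℂ :=
  ∑ n ∈ (Finset.Ioc A B).filter (fun n => n + q ∈ Finset.Ioc A B),
    f (n + q) * (starRingEnd ℂ) (f n)

lemma key1 (hQ : 0 < Q) :
    ∑ m ∈ Finset.Ioc (A - Q) (B - 1), g f A B Q m = (Q : ℂ) * ∑ n ∈ Finset.Ioc A B, f n := by
  unfold g h
  rw [Finset.sum_comm]
  have step : ∀ q ∈ Finset.Icc (1:ℤ) (Q:ℤ),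
      (∑ m ∈ Finset.Ioc (A - Q) (B - 1), if m + q ∈ Finset.Ioc A B then f (m + q) else 0)
        = ∑ n ∈ Finset.Ioc A B, f n := by
    intro q hq
    simp only [Finset.mem_Icc] at hq
    rw [← Finset.sum_filter]
    have hset : (Finset.Ioc (A - (Q:ℤ)) (B - 1)).filter (fun m => m + q ∈ Finset.Ioc A B)
        = Finset.Ioc (A - q) (B - q) := by
      ext m
      simp only [Finset.mem_filter, Finset.mem_Ioc]
      omega
    rw [hset]
    refine Finset.sum_nbij' (fun m => m + q) (fun n => n - q) ?_ ?_ ?_ ?_ ?_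
    · intro m hm; simp only [Finset.mem_Ioc] at hm ⊢; omega
    · intro n hn; simp only [Finset.mem_Ioc] at hn ⊢; omega
    · intro m _; show m + q - q = m; omega
    · intro n _; show n - q + q = n; omega
    · intro m _; rfl
  rw [Finset.sum_congr rfl step, Finset.sum_const, Int.card_Icc]
  have hc : ((Q:ℤ) + 1 - 1).toNat = Q := by omega
  rw [hc, nsmul_eq_mul]

lemma key2 (hQ : 0 < Q) (q1 q2 : ℤ) (h1 : q1 ∈ Finset.Icc (1:ℤ) (Q:ℤ))
    (h2 : q2 ∈ Finset.Icc (1:ℤ) (Q:ℤ)) :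
    ∑ m ∈ Finset.Ioc (A - Q) (B - 1), h f A B q1 m * (starRingEnd ℂ) (h f A B q2 m)
      = W f A B (q1 - q2) := by
  simp only [Finset.mem_Icc] at h1 h2
  have e : ∀ m : ℤ, h f A B q1 m * (starRingEnd ℂ) (h f A B q2 m)
      = if (m + q1 ∈ Finset.Ioc A B ∧ m + q2 ∈ Finset.Ioc A B)
          then f (m + q1) * (starRingEnd ℂ) (f (m + q2)) else 0 := by
    intro m
    unfold h
    by_cases hm1 : m + q1 ∈ Finset.Ioc A B <;> by_cases hm2 : m + q2 ∈ Finset.Ioc A B <;>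
      simp [hm1, hm2]
  rw [Finset.sum_congr rfl (fun m _ => e m), ← Finset.sum_filter]
  unfold W
  refine Finset.sum_nbij' (fun m => m + q2) (fun n => n - q2) ?_ ?_ ?_ ?_ ?_
  · intro m hm
    simp only [Finset.mem_filter, Finset.mem_Ioc] at hm ⊢
    omega
  · intro n hn
    simp only [Finset.mem_filter, Finset.mem_Ioc] at hn ⊢
    omega
  · intro m _; show m + q2 - q2 = m; omega
  · intro n _; show n - q2 + q2 = n; omega
  · intro m _
    have hmm : m + q2 + (q1 - q2) = m + q1 := by ring
    rw [hmm]

lemma key3 :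
    ∑ m ∈ Finset.Ioc (A - Q) (B - 1), ‖g f A B Q m‖ ^ 2
      = (∑ m ∈ Finset.Ioc (A - Q) (B - 1), ∑ q1 ∈ Finset.Icc (1:ℤ) (Q:ℤ),
          ∑ q2 ∈ Finset.Icc (1:ℤ) (Q:ℤ),
            h f A B q1 m * (starRingEnd ℂ) (h f A B q2 m)).re := by
  rw [Complex.re_sum]
  refine Finset.sum_congr rfl fun m _ => ?_
  have e : g f A B Q m * (starRingEnd ℂ) (g f A B Q m)
      = ∑ q1 ∈ Finset.Icc (1:ℤ) (Q:ℤ), ∑ q2 ∈ Finset.Icc (1:ℤ) (Q:ℤ),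
          h f A B q1 m * (starRingEnd ℂ) (h f A B q2 m) := by
    unfold g
    rw [map_sum, Finset.sum_mul_sum]
  rw [← e, Complex.mul_conj]
  simp [Complex.normSq_eq_norm_sq, ← Complex.ofReal_pow]

lemma card_fiber (hQ : 0 < Q) (q : ℤ) (hq : q ∈ Finset.Icc (-(Q:ℤ)) (Q:ℤ)) :
    (((Finset.Icc (1:ℤ) (Q:ℤ)) ×ˢ (Finset.Icc (1:ℤ) (Q:ℤ))).filter
        (fun p => p.1 - p.2 = q)).card = ((Q:ℤ) - |q|).toNat := by
  simp only [Finset.mem_Icc] at hq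
  have hcard : (((Finset.Icc (1:ℤ) (Q:ℤ)) ×ˢ (Finset.Icc (1:ℤ) (Q:ℤ))).filter
        (fun p => p.1 - p.2 = q)).card
      = (Finset.Icc (max 1 (1+q)) (min (Q:ℤ) ((Q:ℤ)+q))).card := by
    apply Finset.card_nbij' (fun p => p.1) (fun x => (x, x - q))
    · intro p hp
      simp only [Finset.mem_coe, Finset.mem_filter, Finset.mem_product, Finset.mem_Icc] at hp ⊢
      omega
    · intro x hx
      simp only [Finset.mem_coe, Finset.mem_filter, Finset.mem_product, Finset.mem_Icc] at hx ⊢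
      omega
    · intro p hp
      simp only [Finset.mem_coe, Finset.mem_filter, Finset.mem_product, Finset.mem_Icc] at hp
      apply Prod.ext
      · rfl
      · show p.1 - q = p.2
        omega
    · intro x _; rfl
  rw [hcard, Int.card_Icc]
  rcases abs_cases q with ⟨h1, h2⟩ | ⟨h1, h2⟩ <;> rw [h1] <;> omega

lemma key4 (hQ : 0 < Q) :
    ∑ q1 ∈ Finset.Icc (1:ℤ) (Q:ℤ), ∑ q2 ∈ Finset.Icc (1:ℤ) (Q:ℤ), W f A B (q1 - q2)
      = ∑ q ∈ Finset.Icc (-(Q:ℤ)) (Q:ℤ), (((Q:ℤ) - |q| : ℤ) : ℂ) * W f A B q := by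
  rw [← Finset.sum_product']
  have hmaps : ∀ p ∈ (Finset.Icc (1:ℤ) (Q:ℤ)) ×ˢ (Finset.Icc (1:ℤ) (Q:ℤ)),
      p.1 - p.2 ∈ Finset.Icc (-(Q:ℤ)) (Q:ℤ) := by
    intro p hp
    simp only [Finset.mem_product, Finset.mem_Icc] at hp ⊢
    omega
  rw [← Finset.sum_fiberwise_of_maps_to hmaps (fun p => W f A B (p.1 - p.2))]
  refine Finset.sum_congr rfl fun q hq => ?_
  have e : ∀ p ∈ ((Finset.Icc (1:ℤ) (Q:ℤ)) ×ˢ (Finset.Icc (1:ℤ) (Q:ℤ))).filter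
      (fun p => p.1 - p.2 = q), W f A B (p.1 - p.2) = W f A B q := by
    intro p hp
    rw [(Finset.mem_filter.mp hp).2]
  rw [Finset.sum_congr rfl e, Finset.sum_const, card_fiber Q hQ q hq, nsmul_eq_mul]
  congr 1
  have hnn : (0:ℤ) ≤ (Q:ℤ) - |q| := by
    simp only [Finset.mem_Icc] at hq
    rcases abs_cases q with ⟨h1, _⟩ | ⟨h1, _⟩ <;> rw [h1] <;> omega
  exact_mod_cast congrArg (Int.cast : ℤ → ℂ) (Int.toNat_of_nonneg hnn)

lemma key5 (hQ : 0 < Q) :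
    ∑ m ∈ Finset.Ioc (A - Q) (B - 1), ‖g f A B Q m‖ ^ 2
      = (∑ q ∈ Finset.Icc (-(Q:ℤ)) (Q:ℤ), (((Q:ℤ) - |q| : ℤ) : ℂ) * W f A B q).re := by
  rw [key3, ← key4 f A B Q hQ]
  congr 1
  rw [Finset.sum_comm]
  refine Finset.sum_congr rfl fun q1 hq1 => ?_
  rw [Finset.sum_comm]
  exact Finset.sum_congr rfl fun q2 hq2 => key2 f A B Q hQ q1 q2 hq1 hq2

end WvdC

set_option maxHeartbeats 1000000 in
/-- Weyl–van der Corput inequality (Iwaniec–Kowalski, Lemma 8.17). -/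
theorem stmt_2 (a b : ℝ) (hab : a < b) (f : ℤ → ℂ) (Q : ℕ) (hQ : 0 < Q) :
    ‖∑ n ∈ Finset.Ioc ⌊a⌋ ⌊b⌋, f n‖ ^ 2 ≤
      ((1 + (b - a) / Q) *
        ∑ q ∈ Finset.Icc (-(Q : ℤ)) (Q : ℤ), ((1 - |(q : ℝ)| / Q : ℝ) : ℂ) *
          ∑ n ∈ (Finset.Ioc ⌊a⌋ ⌊b⌋).filter (fun n => n + q ∈ Finset.Ioc ⌊a⌋ ⌊b⌋),
            f (n + q) * (starRingEnd ℂ) (f n)).re := by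
  show ‖∑ n ∈ Finset.Ioc ⌊a⌋ ⌊b⌋, f n‖ ^ 2 ≤
      ((1 + (b - a) / Q) *
        ∑ q ∈ Finset.Icc (-(Q : ℤ)) (Q : ℤ), ((1 - |(q : ℝ)| / Q : ℝ) : ℂ) *
          WvdC.W f ⌊a⌋ ⌊b⌋ q).re
  set A := ⌊a⌋ with hA
  set B := ⌊b⌋ with hB
  have hAB : A ≤ B := Int.floor_le_floor hab.le
  have hBb : (B:ℝ) ≤ b := Int.floor_le b
  have haA : a < A + 1 := Int.lt_floor_add_one a
  have hQR : (0:ℝ) < Q := by exact_mod_cast hQ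
  set M : Finset ℤ := Finset.Ioc (A - Q) (B - 1) with hM
  set S : ℂ := ∑ n ∈ Finset.Ioc A B, f n with hS
  -- Cauchy–Schwarz
  have cs : ‖∑ m ∈ M, WvdC.g f A B Q m‖ ^ 2 ≤ M.card * ∑ m ∈ M, ‖WvdC.g f A B Q m‖ ^ 2 := by
    calc ‖∑ m ∈ M, WvdC.g f A B Q m‖ ^ 2 ≤ (∑ m ∈ M, ‖WvdC.g f A B Q m‖) ^ 2 := by
          exact pow_le_pow_left₀ (norm_nonneg _) (norm_sum_le _ _) 2
      _ ≤ M.card * ∑ m ∈ M, ‖WvdC.g f A B Q m‖ ^ 2 := sq_sum_le_card_mul_sum_sq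
  have e1 : (Q:ℝ)^2 * ‖S‖^2 = ‖∑ m ∈ M, WvdC.g f A B Q m‖^2 := by
    rw [hM, WvdC.key1 f A B Q hQ, norm_mul, mul_pow]
    norm_num
    exact Or.inl rfl
  have hTre0 : (0:ℝ) ≤ (∑ q ∈ Finset.Icc (-(Q:ℤ)) (Q:ℤ),
      (((Q:ℤ) - |q| : ℤ) : ℂ) * WvdC.W f A B q).re := by
    rw [← WvdC.key5 f A B Q hQ]
    apply Finset.sum_nonneg
    intro m _
    positivity
  set T : ℝ := (∑ q ∈ Finset.Icc (-(Q:ℤ)) (Q:ℤ),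
      (((Q:ℤ) - |q| : ℤ) : ℂ) * WvdC.W f A B q).re with hT
  have hNle : (M.card : ℝ) ≤ (Q:ℝ) + (b - a) := by
    rw [hM, Int.card_Ioc]
    have h1 : ((B - 1 - (A - (Q:ℤ))).toNat : ℤ) = B - A + Q - 1 := by omega
    calc ((B - 1 - (A - (Q:ℤ))).toNat : ℝ) = ((B:ℝ) - A + Q - 1) := by exact_mod_cast h1
      _ ≤ (Q:ℝ) + (b - a) := by linarith
  have main : (Q:ℝ)^2 * ‖S‖^2 ≤ ((Q:ℝ) + (b - a)) * T := by
    calc (Q:ℝ)^2 * ‖S‖^2 = ‖∑ m ∈ M, WvdC.g f A B Q m‖^2 := e1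
      _ ≤ M.card * ∑ m ∈ M, ‖WvdC.g f A B Q m‖^2 := cs
      _ = M.card * T := by rw [hM, WvdC.key5 f A B Q hQ, hT]
      _ ≤ ((Q:ℝ) + (b - a)) * T := mul_le_mul_of_nonneg_right hNle hTre0
  -- compute the real part of the RHS
  have hTre_eq : T = ∑ q ∈ Finset.Icc (-(Q:ℤ)) (Q:ℤ), ((Q:ℝ) - |(q:ℝ)|) * (WvdC.W f A B q).re := by
    rw [hT, Complex.re_sum]
    refine Finset.sum_congr rfl fun q hq => ?_
    have e : (((Q:ℤ) - |q| : ℤ) : ℂ) = (((Q:ℝ) - |(q:ℝ)| : ℝ) : ℂ) := by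
      rw [← Complex.ofReal_intCast, Complex.ofReal_inj]
      push_cast [Int.cast_abs]
      ring
    rw [e, Complex.re_ofReal_mul]
  have hRHS : ((1 + ((b:ℂ) - (a:ℂ)) / (Q:ℂ)) *
        ∑ q ∈ Finset.Icc (-(Q:ℤ)) (Q:ℤ), ((1 - |(q : ℝ)| / Q : ℝ) : ℂ) * WvdC.W f A B q).re
      = (1 + (b - a)/(Q:ℝ)) *
        ∑ q ∈ Finset.Icc (-(Q:ℤ)) (Q:ℤ), (1 - |(q:ℝ)|/(Q:ℝ)) * (WvdC.W f A B q).re := by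
    have hsc : (1 + ((b:ℂ) - (a:ℂ)) / (Q:ℂ)) = (((1 + (b - a)/(Q:ℝ)) : ℝ) : ℂ) := by
      push_cast; ring
    rw [hsc, Complex.re_ofReal_mul, Complex.re_sum]
    congr 1
    refine Finset.sum_congr rfl fun q hq => ?_
    rw [Complex.re_ofReal_mul]
  rw [hRHS]
  have hsum_eq : ∑ q ∈ Finset.Icc (-(Q:ℤ)) (Q:ℤ), (1 - |(q:ℝ)|/(Q:ℝ)) * (WvdC.W f A B q).re
      = (1/(Q:ℝ)) * ∑ q ∈ Finset.Icc (-(Q:ℤ)) (Q:ℤ), ((Q:ℝ) - |(q:ℝ)|) * (WvdC.W f A B q).re := by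
    rw [Finset.mul_sum]
    refine Finset.sum_congr rfl fun q hq => ?_
    field_simp
  rw [hsum_eq, ← hTre_eq]
  have hQ0 : (Q:ℝ) ≠ 0 := ne_of_gt hQR
  have keyid : (1 + (b - a)/(Q:ℝ)) * ((1/(Q:ℝ)) * T) = (((Q:ℝ) + (b - a)) * T) / (Q:ℝ)^2 := by
    rw [eq_div_iff (by positivity : ((Q:ℝ)^2) ≠ 0)]
    field_simp
  rw [keyid, le_div_iff₀ (by positivity : (0:ℝ) < (Q:ℝ)^2)]
  nlinarith [main]
end

section
/- Let $X \geq 2$, $c > 1$, and define $S(\alpha) = \sum_{X/2 < p \leq X} e(\alpha p^c) \log p$ where the sum is over primes. Then for any $P \geq 1$, $\int_{-P}^{P} |S(\alpha)|^2 \, d\alpha \ll P X \log^3 X$. -/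
open Real Complex intervalIntegral

private lemma rpow_gap {c : ℝ} (hc : 1 ≤ c) {a b : ℝ} (ha : 1 ≤ a) (hab : a ≤ b) :
    c * (b - a) ≤ b ^ c - a ^ c := by
  have ha0 : (0:ℝ) < a := by linarith
  have hb0 : (0:ℝ) ≤ b := by linarith
  have hs0 : (0:ℝ) ≤ (b - a) / a := div_nonneg (by linarith) ha0.le
  have hbern := one_add_mul_self_le_rpow_one_add (by linarith : (-1:ℝ) ≤ (b - a)/a) hc
  have h1 : 1 + (b - a)/a = b / a := by field_simp; ring
  rw [h1, Real.div_rpow hb0 ha0.le] at hbern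
  have hac : (0:ℝ) < a ^ c := Real.rpow_pos_of_pos ha0 c
  have h3 : (1 + c * ((b - a)/a)) * a ^ c ≤ b ^ c := by
    calc (1 + c * ((b - a)/a)) * a ^ c ≤ (b ^ c / a ^ c) * a ^ c := by nlinarith
    _ = b ^ c := by field_simp
  have h4 : (1:ℝ) ≤ a ^ (c - 1) := Real.one_le_rpow ha (by linarith)
  have h5 : a ^ c / a = a ^ (c - 1) := by
    rw [Real.rpow_sub ha0, Real.rpow_one]
  have h6 : (1 + c * ((b - a)/a)) * a ^ c = a ^ c + c * (b - a) * (a ^ c / a) := by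
    field_simp
  rw [h6, h5] at h3
  nlinarith [mul_nonneg (by linarith : (0:ℝ) ≤ c) (by linarith : (0:ℝ) ≤ b - a)]

private lemma abs_rpow_gap {c : ℝ} (hc : 1 ≤ c) {a b : ℝ} (ha : 1 ≤ a) (hb : 1 ≤ b) :
    c * |a - b| ≤ |a ^ c - b ^ c| := by
  rcases le_total a b with h | h
  · have := rpow_gap hc ha h
    rw [abs_sub_comm a b, abs_sub_comm (a ^ c), _root_.abs_of_nonneg (by linarith),
      _root_.abs_of_nonneg (by nlinarith)]
    linarith
  · have := rpow_gap hc hb h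
    rw [_root_.abs_of_nonneg (by linarith), _root_.abs_of_nonneg (by nlinarith)]
    linarith

private lemma osc_bound (P g : ℝ) (hg : g ≠ 0) :
    ‖∫ α in (-P)..P, Complex.exp (2 * Real.pi * Complex.I * ((α * g : ℝ) : ℂ))‖
      ≤ 1 / (Real.pi * |g|) := by
  have hk : (2 * (Real.pi:ℂ) * Complex.I * (g:ℂ)) ≠ 0 := by
    simp [Real.pi_ne_zero, hg, Complex.I_ne_zero]
  have h1 : ∀ α : ℝ, Complex.exp (2 * Real.pi * Complex.I * ((α * g : ℝ) : ℂ))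
      = Complex.exp ((2 * (Real.pi:ℂ) * Complex.I * (g:ℂ)) * (α:ℂ)) := by
    intro α; congr 1; push_cast; ring
  simp only [h1]
  rw [integral_exp_mul_complex hk]
  have hnorm : ∀ x : ℝ, ‖Complex.exp ((2 * (Real.pi:ℂ) * Complex.I * (g:ℂ)) * (x:ℂ))‖ = 1 := by
    intro x
    have h2 : (2 * (Real.pi:ℂ) * Complex.I * (g:ℂ)) * (x:ℂ)
        = ((2 * Real.pi * g * x : ℝ) : ℂ) * Complex.I := by push_cast; ring
    rw [h2, Complex.norm_exp_ofReal_mul_I]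
  have hden : ‖(2 * (Real.pi:ℂ) * Complex.I * (g:ℂ))‖ = 2 * Real.pi * |g| := by
    simp [map_mul, Complex.norm_real, _root_.abs_of_nonneg Real.pi_pos.le]
  rw [norm_div, hden]
  have hnum : ‖Complex.exp ((2 * (Real.pi:ℂ) * Complex.I * (g:ℂ)) * (P:ℂ))
      - Complex.exp ((2 * (Real.pi:ℂ) * Complex.I * (g:ℂ)) * ((-P:ℝ):ℂ))‖ ≤ 2 := by
    refine (norm_sub_le _ _).trans ?_
    rw [hnorm P, hnorm (-P)]; norm_num
  have hgpos : 0 < |g| := abs_pos.mpr hg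
  have heq : (1:ℝ) / (Real.pi * |g|) = 2 / (2 * Real.pi * |g|) := by
    rw [div_eq_div_iff (by positivity) (by positivity)]; ring
  rw [heq]
  gcongr

private lemma cast_nat_dist (a b : ℕ) : ((Nat.dist a b : ℕ) : ℝ) = |(a:ℝ) - (b:ℝ)| := by
  rcases le_total a b with h | h
  · have h' : (a:ℝ) ≤ (b:ℝ) := by exact_mod_cast h
    rw [Nat.dist_eq_sub_of_le h, Nat.cast_sub h, abs_sub_comm,
      _root_.abs_of_nonneg (sub_nonneg.mpr h')]
  · have h' : (b:ℝ) ≤ (a:ℝ) := by exact_mod_cast h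
    rw [Nat.dist_eq_sub_of_le_right h, Nat.cast_sub h,
      _root_.abs_of_nonneg (sub_nonneg.mpr h')]

private lemma inner_harmonic (n p1 : ℕ) (hp1 : p1 ≤ n) (t : Finset ℕ) (ht : ∀ p ∈ t, p ≤ n) :
    ∑ p2 ∈ t.filter (fun p2 => ¬ p1 = p2), ((Nat.dist p1 p2 : ℕ) : ℝ)⁻¹
      ≤ 2 * (1 + Real.log n) := by
  have hmap : ∀ p2 ∈ t.filter (fun p2 => ¬ p1 = p2), Nat.dist p1 p2 ∈ Finset.Icc 1 n := by
    intro p2 hp2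
    simp only [Finset.mem_filter] at hp2
    have h1 := ht p2 hp2.1
    have h2 := hp2.2
    simp only [Finset.mem_Icc, Nat.dist]
    omega
  rw [← Finset.sum_fiberwise_of_maps_to hmap (fun p2 => ((Nat.dist p1 p2 : ℕ) : ℝ)⁻¹)]
  have hstep : ∀ d ∈ Finset.Icc 1 n,
      ∑ p2 ∈ (t.filter (fun p2 => ¬ p1 = p2)).filter (fun p2 => Nat.dist p1 p2 = d),
        ((Nat.dist p1 p2 : ℕ) : ℝ)⁻¹ ≤ 2 * (d:ℝ)⁻¹ := by
    intro d hd
    have hcard : ((t.filter (fun p2 => ¬ p1 = p2)).filter (fun p2 => Nat.dist p1 p2 = d)).card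
        ≤ 2 := by
      refine le_trans (Finset.card_le_card (fun x hx => ?_))
        ((Finset.card_insert_le (p1 + d) {p1 - d}).trans (by simp))
      simp only [Finset.mem_filter] at hx
      have h2 := hx.2
      simp only [Nat.dist] at h2
      simp only [Finset.mem_insert, Finset.mem_singleton]
      omega
    calc ∑ p2 ∈ (t.filter (fun p2 => ¬ p1 = p2)).filter (fun p2 => Nat.dist p1 p2 = d),
          ((Nat.dist p1 p2 : ℕ) : ℝ)⁻¹
        = ∑ _p2 ∈ (t.filter (fun p2 => ¬ p1 = p2)).filter (fun p2 => Nat.dist p1 p2 = d),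
          ((d:ℕ) : ℝ)⁻¹ := by
          refine Finset.sum_congr rfl fun x hx => ?_
          simp only [Finset.mem_filter] at hx
          rw [hx.2]
      _ = (((t.filter (fun p2 => ¬ p1 = p2)).filter (fun p2 => Nat.dist p1 p2 = d)).card : ℝ)
          * ((d:ℕ):ℝ)⁻¹ := by rw [Finset.sum_const, nsmul_eq_mul]
      _ ≤ 2 * (d:ℝ)⁻¹ := by
          apply mul_le_mul_of_nonneg_right (by exact_mod_cast hcard) (by positivity)
  calc ∑ d ∈ Finset.Icc 1 n, ∑ p2 ∈ (t.filter (fun p2 => ¬ p1 = p2)).filter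
        (fun p2 => Nat.dist p1 p2 = d), ((Nat.dist p1 p2 : ℕ) : ℝ)⁻¹
      ≤ ∑ d ∈ Finset.Icc 1 n, 2 * (d:ℝ)⁻¹ := Finset.sum_le_sum hstep
    _ = 2 * ∑ d ∈ Finset.Icc 1 n, (d:ℝ)⁻¹ := by rw [Finset.mul_sum]
    _ = 2 * ((harmonic n : ℚ) : ℝ) := by rw [harmonic_eq_sum_Icc]; push_cast; ring
    _ ≤ 2 * (1 + Real.log n) := by
        have := harmonic_le_one_add_log n
        have h2 : ((harmonic n : ℚ) : ℝ) ≤ 1 + Real.log n := by exact_mod_cast this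
        linarith

private lemma pair_mul (x y L1 L2 : ℝ) :
    (Complex.exp (2 * Real.pi * Complex.I * ((x : ℝ) : ℂ)) * ((L1:ℝ):ℂ)) *
      (starRingEnd ℂ) (Complex.exp (2 * Real.pi * Complex.I * ((y : ℝ) : ℂ)) * ((L2:ℝ):ℂ)) =
    Complex.exp (2 * Real.pi * Complex.I * (((x - y) : ℝ) : ℂ)) * (((L1 * L2 : ℝ)) : ℂ) := by
  rw [map_mul, ← Complex.exp_conj, Complex.conj_ofReal]
  have hconj : (starRingEnd ℂ) (2 * (Real.pi:ℂ) * Complex.I * ((y:ℝ):ℂ))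
      = -(2 * (Real.pi:ℂ) * Complex.I * ((y:ℝ):ℂ)) := by
    simp only [map_mul, map_ofNat, Complex.conj_ofReal, Complex.conj_I]; ring
  rw [hconj, mul_mul_mul_comm, ← Complex.exp_add]
  congr 1
  · push_cast; ring
  · push_cast; ring

noncomputable def Eterm (c : ℝ) (q : ℕ × ℕ) (α : ℝ) : ℂ :=
  Complex.exp (2 * Real.pi * Complex.I * ((α * ((q.1 : ℝ) ^ c - (q.2 : ℝ) ^ c) : ℝ) : ℂ)) *
    ((Real.log q.1 * Real.log q.2 : ℝ) : ℂ)

lemma Eterm_continuous (c : ℝ) (q : ℕ × ℕ) : Continuous (Eterm c q) := by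
  unfold Eterm
  fun_prop

set_option maxHeartbeats 2000000 in
theorem stmt_9 (c : ℝ) (hc : 1 < c) :
    ∃ C : ℝ, 0 < C ∧ ∀ (X P : ℝ), 2 ≤ X → 1 ≤ P →
      (∫ α in (-P)..P,
          ‖∑ p ∈ (Finset.Ioc ⌊X/2⌋₊ ⌊X⌋₊).filter Nat.Prime,
              Complex.exp (2 * Real.pi * Complex.I * ((α * (p : ℝ) ^ c : ℝ) : ℂ)) *
                ((Real.log p : ℝ) : ℂ)‖ ^ 2) ≤
        C * P * X * (Real.log X) ^ 3 := by
  have hc0 : (0:ℝ) < c := by linarith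
  refine ⟨3 + 2/c, by positivity, ?_⟩
  intro X P hX hP
  have hX0 : (0:ℝ) < X := by linarith
  have hP0 : (0:ℝ) < P := by linarith
  set n := ⌊X⌋₊ with hn
  set s := (Finset.Ioc ⌊X/2⌋₊ n).filter Nat.Prime with hsdef
  set L := Real.log X with hLdef
  have hnX : (n:ℝ) ≤ X := Nat.floor_le hX0.le
  have hn2 : 2 ≤ n := Nat.le_floor (by exact_mod_cast hX)
  have hmem : ∀ p ∈ s, 1 ≤ p ∧ p ≤ n := by
    intro p hp
    simp only [hsdef, Finset.mem_filter, Finset.mem_Ioc] at hp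
    exact ⟨hp.2.one_lt.le, hp.1.2⟩
  have hpX : ∀ p ∈ s, (p:ℝ) ≤ X := fun p hp =>
    le_trans (by exact_mod_cast (hmem p hp).2) hnX
  have hlog : ∀ p ∈ s, 0 ≤ Real.log p ∧ Real.log p ≤ L := by
    intro p hp
    constructor
    · exact Real.log_nonneg (by exact_mod_cast (hmem p hp).1)
    · have hp0 : (0:ℝ) < (p:ℝ) := by
        have := (hmem p hp).1
        exact_mod_cast Nat.lt_of_lt_of_le Nat.zero_lt_one this
      exact Real.log_le_log hp0 (hpX p hp)
  have hcard : (s.card : ℝ) ≤ X := by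
    have h1 : s.card ≤ n := by
      calc s.card ≤ (Finset.Ioc ⌊X/2⌋₊ n).card := Finset.card_filter_le _ _
        _ = n - ⌊X/2⌋₊ := by rw [Nat.card_Ioc]
        _ ≤ n := Nat.sub_le _ _
    exact le_trans (by exact_mod_cast h1) hnX
  have hL2 : Real.log 2 ≤ L := Real.log_le_log (by norm_num) hX
  have hL069 : (0.6931471803 : ℝ) ≤ L := le_trans Real.log_two_gt_d9.le hL2
  have hL0 : (0:ℝ) < L := by linarith
  -- pointwise rewrite
  have hnormsq : ∀ z : ℂ, ‖z‖^2 = (z * (starRingEnd ℂ) z).re := by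
    intro z
    rw [Complex.mul_conj, Complex.ofReal_re, Complex.normSq_eq_norm_sq]
  have hpt : ∀ α : ℝ,
      ‖∑ p ∈ s, Complex.exp (2 * Real.pi * Complex.I * ((α * (p : ℝ) ^ c : ℝ) : ℂ)) *
          ((Real.log p : ℝ) : ℂ)‖ ^ 2
        = ∑ q ∈ s ×ˢ s, (Eterm c q α).re := by
    intro α
    rw [hnormsq, map_sum, Finset.sum_mul_sum, Finset.sum_product, Complex.re_sum]
    refine Finset.sum_congr rfl fun p1 _ => ?_
    rw [Complex.re_sum]
    refine Finset.sum_congr rfl fun p2 _ => ?_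
    congr 1
    rw [pair_mul (α * (p1:ℝ)^c) (α * (p2:ℝ)^c) (Real.log p1) (Real.log p2)]
    unfold Eterm
    congr 3
    ring
  have hEInt : ∀ q : ℕ × ℕ, IntervalIntegrable (fun α => (Eterm c q α).re)
      MeasureTheory.volume (-P) P :=
    fun q => (Complex.continuous_re.comp (Eterm_continuous c q)).intervalIntegrable _ _
  calc (∫ α in (-P)..P,
        ‖∑ p ∈ s, Complex.exp (2 * Real.pi * Complex.I * ((α * (p : ℝ) ^ c : ℝ) : ℂ)) *
            ((Real.log p : ℝ) : ℂ)‖ ^ 2)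
      = ∫ α in (-P)..P, ∑ q ∈ s ×ˢ s, (Eterm c q α).re := by simp only [hpt]
    _ = ∑ q ∈ s ×ˢ s, ∫ α in (-P)..P, (Eterm c q α).re :=
        intervalIntegral.integral_finset_sum (fun q _ => hEInt q)
    _ = (∑ q ∈ (s ×ˢ s).filter (fun q => q.1 = q.2), ∫ α in (-P)..P, (Eterm c q α).re)
        + ∑ q ∈ (s ×ˢ s).filter (fun q => ¬ q.1 = q.2), ∫ α in (-P)..P, (Eterm c q α).re :=
        (Finset.sum_filter_add_sum_filter_not _ _ _).symm
    _ ≤ X * (2 * P * L^2) + X * (L^2 / (Real.pi * c) * (2 * (1 + L))) := by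
        gcongr ?_ + ?_
        · -- diagonal
          have hdiag : ∀ q ∈ (s ×ˢ s).filter (fun q => q.1 = q.2),
              (∫ α in (-P)..P, (Eterm c q α).re) ≤ 2 * P * L^2 := by
            intro q hq
            simp only [Finset.mem_filter, Finset.mem_product] at hq
            obtain ⟨⟨hq1, hq2⟩, heq⟩ := hq
            have hre : ∀ α : ℝ, (Eterm c q α).re = Real.log q.1 * Real.log q.2 := by
              intro α
              unfold Eterm
              rw [heq, sub_self, mul_zero, Complex.ofReal_zero, mul_zero, Complex.exp_zero,
                one_mul, Complex.ofReal_re]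
            simp only [hre]
            rw [intervalIntegral.integral_const, smul_eq_mul]
            have h1 := hlog q.1 hq1
            have h2 := hlog q.2 hq2
            have hLL : Real.log q.1 * Real.log q.2 ≤ L^2 := by nlinarith
            have hLLnn : 0 ≤ Real.log q.1 * Real.log q.2 := mul_nonneg h1.1 h2.1
            nlinarith
          calc ∑ q ∈ (s ×ˢ s).filter (fun q => q.1 = q.2), ∫ α in (-P)..P, (Eterm c q α).re
              ≤ ∑ _q ∈ (s ×ˢ s).filter (fun q => q.1 = q.2), 2 * P * L^2 :=
                Finset.sum_le_sum hdiag
            _ = (((s ×ˢ s).filter (fun q => q.1 = q.2)).card : ℝ) * (2 * P * L^2) := by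
                rw [Finset.sum_const, nsmul_eq_mul]
            _ ≤ X * (2 * P * L^2) := by
                have hcard2 : ((s ×ˢ s).filter (fun q => q.1 = q.2)).card ≤ s.card := by
                  apply Finset.card_le_card_of_injOn Prod.fst
                  · intro q hq
                    simp only [Finset.coe_filter, Finset.mem_product, Set.mem_setOf_eq] at hq
                    exact hq.1.1
                  · intro q hq q' hq' h
                    simp only [Finset.coe_filter, Finset.mem_product, Set.mem_setOf_eq] at hq hq'
                    exact Prod.ext h (by rw [← hq.2, ← hq'.2, h])
                have hXc : (((s ×ˢ s).filter (fun q => q.1 = q.2)).card : ℝ) ≤ X :=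
                  le_trans (by exact_mod_cast hcard2) hcard
                exact mul_le_mul_of_nonneg_right hXc (by positivity)
        · -- off-diagonal
          have hoff : ∀ q ∈ (s ×ˢ s).filter (fun q => ¬ q.1 = q.2),
              (∫ α in (-P)..P, (Eterm c q α).re)
                ≤ L^2 / (Real.pi * c) * ((Nat.dist q.1 q.2 : ℕ) : ℝ)⁻¹ := by
            intro q hq
            simp only [Finset.mem_filter, Finset.mem_product] at hq
            obtain ⟨⟨hq1, hq2⟩, hne⟩ := hq
            have h11 : (1:ℝ) ≤ (q.1:ℝ) := by exact_mod_cast (hmem q.1 hq1).1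
            have h12 : (1:ℝ) ≤ (q.2:ℝ) := by exact_mod_cast (hmem q.2 hq2).1
            set g : ℝ := (q.1:ℝ)^c - (q.2:ℝ)^c with hg
            have hdist : c * |(q.1:ℝ) - (q.2:ℝ)| ≤ |g| := abs_rpow_gap hc.le h11 h12
            have habs : (0:ℝ) < |(q.1:ℝ) - (q.2:ℝ)| := by
              rw [abs_pos, sub_ne_zero]
              exact_mod_cast hne
            have hgne : g ≠ 0 := by
              rw [← abs_pos]
              nlinarith
            have hIntE : IntervalIntegrable (Eterm c q) MeasureTheory.volume (-P) P :=
              (Eterm_continuous c q).intervalIntegrable _ _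
            have hre : (∫ α in (-P)..P, (Eterm c q α).re)
                = (∫ α in (-P)..P, Eterm c q α).re :=
              Complex.reCLM.intervalIntegral_comp_comm hIntE
            rw [hre]
            have hsplit : (∫ α in (-P)..P, Eterm c q α)
                = (∫ α in (-P)..P,
                    Complex.exp (2 * Real.pi * Complex.I * ((α * g : ℝ) : ℂ)))
                  * ((Real.log q.1 * Real.log q.2 : ℝ) : ℂ) := by
              unfold Eterm
              rw [← intervalIntegral.integral_mul_const]
            have hlognn : 0 ≤ Real.log q.1 * Real.log q.2 :=
              mul_nonneg (hlog q.1 hq1).1 (hlog q.2 hq2).1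
            calc (∫ α in (-P)..P, Eterm c q α).re
                ≤ ‖∫ α in (-P)..P, Eterm c q α‖ := Complex.re_le_norm _
              _ = ‖∫ α in (-P)..P,
                    Complex.exp (2 * Real.pi * Complex.I * ((α * g : ℝ) : ℂ))‖
                  * |Real.log q.1 * Real.log q.2| := by
                  rw [hsplit, norm_mul, Complex.norm_real, Real.norm_eq_abs]
              _ ≤ (1 / (Real.pi * |g|)) * (L^2) := by
                  apply mul_le_mul (osc_bound P g hgne)
                  · rw [_root_.abs_of_nonneg hlognn]
                    have h1 := hlog q.1 hq1
                    have h2 := hlog q.2 hq2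
                    nlinarith
                  · exact abs_nonneg _
                  · positivity
              _ ≤ (1 / (Real.pi * (c * |(q.1:ℝ) - (q.2:ℝ)|))) * (L^2) := by
                  apply mul_le_mul_of_nonneg_right _ (by positivity)
                  apply one_div_le_one_div_of_le (by positivity)
                  exact mul_le_mul_of_nonneg_left hdist Real.pi_pos.le
              _ = L^2 / (Real.pi * c) * ((Nat.dist q.1 q.2 : ℕ) : ℝ)⁻¹ := by
                  rw [cast_nat_dist]
                  field_simp
          calc ∑ q ∈ (s ×ˢ s).filter (fun q => ¬ q.1 = q.2), ∫ α in (-P)..P, (Eterm c q α).re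
              ≤ ∑ q ∈ (s ×ˢ s).filter (fun q => ¬ q.1 = q.2),
                  L^2 / (Real.pi * c) * ((Nat.dist q.1 q.2 : ℕ) : ℝ)⁻¹ :=
                Finset.sum_le_sum hoff
            _ = ∑ p1 ∈ s, ∑ p2 ∈ s.filter (fun p2 => ¬ p1 = p2),
                  L^2 / (Real.pi * c) * ((Nat.dist p1 p2 : ℕ) : ℝ)⁻¹ := by
                rw [Finset.sum_filter, Finset.sum_product]
                exact Finset.sum_congr rfl fun p1 _ => (Finset.sum_filter _ _).symm
            _ ≤ ∑ _p1 ∈ s, L^2 / (Real.pi * c) * (2 * (1 + Real.log n)) := by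
                apply Finset.sum_le_sum
                intro p1 hp1
                rw [← Finset.mul_sum]
                apply mul_le_mul_of_nonneg_left _ (by positivity)
                exact inner_harmonic n p1 (hmem p1 hp1).2 s (fun p hp => (hmem p hp).2)
            _ = (s.card : ℝ) * (L^2 / (Real.pi * c) * (2 * (1 + Real.log n))) := by
                rw [Finset.sum_const, nsmul_eq_mul]
            _ ≤ X * (L^2 / (Real.pi * c) * (2 * (1 + L))) := by
                have hlogn : Real.log n ≤ L := Real.log_le_log (by positivity) hnX
                have h1 : (0:ℝ) ≤ L^2 / (Real.pi * c) := by positivity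
                have h2 : (0:ℝ) ≤ Real.log n := Real.log_nonneg (by exact_mod_cast hn2.trans' (by norm_num))
                have h3 : L^2 / (Real.pi * c) * (2 * (1 + Real.log n))
                    ≤ L^2 / (Real.pi * c) * (2 * (1 + L)) := by nlinarith
                have h4 : (0:ℝ) ≤ L^2 / (Real.pi * c) * (2 * (1 + Real.log n)) := by positivity
                nlinarith
    _ ≤ (3 + 2/c) * P * X * L ^ 3 := by
        have hpi : (3:ℝ) < Real.pi := Real.pi_gt_three
        have key1 : X * (2 * P * L^2) ≤ 3 * P * X * L^3 := by
          have h1 : 2*L^2 ≤ 3*L^3 := by nlinarith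
          calc X * (2*P*L^2) = (X*P) * (2*L^2) := by ring
            _ ≤ (X*P) * (3*L^3) :=
                mul_le_mul_of_nonneg_left h1 (by positivity)
            _ = 3*P*X*L^3 := by ring
        have key2 : X * (L^2 / (Real.pi * c) * (2 * (1 + L))) ≤ 2/c * P * X * L^3 := by
          have h2 : 2*(1+L)*L^2 ≤ 6*L^3 := by nlinarith
          have hA : (0:ℝ) ≤ X/c*L^3 := by positivity
          calc X * (L^2 / (Real.pi * c) * (2 * (1 + L)))
              = (X/(Real.pi*c)) * (2*(1+L)*L^2) := by ring
            _ ≤ (X/(Real.pi*c)) * (6*L^3) :=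
                mul_le_mul_of_nonneg_left h2 (by positivity)
            _ = (6/Real.pi) * (X/c*L^3) := by ring
            _ ≤ 2 * (X/c*L^3) :=
                mul_le_mul_of_nonneg_right
                  (by rw [div_le_iff₀ Real.pi_pos]; linarith) hA
            _ = 2/c * 1 * X * L^3 := by ring
            _ ≤ 2/c * P * X * L^3 := by
                have hB : (0:ℝ) ≤ 2/c * X * L^3 := by positivity
                nlinarith
        have : (3 + 2/c) * P * X * L^3 = 3*P*X*L^3 + 2/c*P*X*L^3 := by ring
        rw [this]
        linarith
end
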